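/- For all integers q ≥ 2 and n ≥ 1, the family 𝓝_q is n-cell implementable under scenario (◦∗) if and only if q ≤ 2 when n = 1, and q ≤ n when n ≥ 2. -/

import Mathlib

/-- The alphabet 𝔹• = {0, 1, ∗, •}. -/
inductive BB : Type
  | zero
  | one
  | star
  | reject
deriving DecidableEq

instance instFintypeBB : Fintype BB :=
  ⟨{BB.zero, BB.one, BB.star, BB.reject}, fun x => by cases x <;> simp⟩

/-- The cell function T : 𝔹• × 𝔹• → 𝔹: T(u,ϑ) = 1 iff u = ∗, or ϑ = ∗,
or u,ϑ ∈ 𝔹 with u = ϑ. -/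
def Tcell : BB → BB → Bool
  | BB.star, _ => true
  | _, BB.star => true
  | BB.zero, BB.zero => true
  | BB.one, BB.one => true
  | _, _ => false

/-- The word-level function T(u,ϑ) = ⋀_{j<n} T(u_j, ϑ_j). -/
def Tword {n : ℕ} (u θ : Fin n → BB) : Bool :=
  decide (∀ j, Tcell (u j) (θ j) = true)

/-- The alphabet 𝔹 = {0,1} ⊆ 𝔹•. -/
def Bcirc : Set BB := {BB.zero, BB.one}

/-- The alphabet 𝔹∗ = {0,1,∗} ⊆ 𝔹•. -/
def Bstar : Set BB := {BB.zero, BB.one, BB.star}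

/-- The full alphabet 𝔹•. -/
def Bdot : Set BB := Set.univ

/-- A family Φ of functions {0,…,q−1} → 𝔹 is n-cell implementable under
scenario (A,B) if there are mappings u : {0,…,q−1} → A^n and ϑ : Φ → B^n
with f(x) = T(u(x), ϑ(f)) for all f ∈ Φ and x. -/
def Implementable (A B : Set BB) (n q : ℕ) (Φ : Set (Fin q → Bool)) : Prop :=
  ∃ u : Fin q → Fin n → BB, ∃ θ : (Fin q → Bool) → Fin n → BB,
    (∀ x j, u x j ∈ A) ∧ (∀ f ∈ Φ, ∀ j, θ f j ∈ B) ∧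
    (∀ f ∈ Φ, ∀ x, f x = Tword (u x) (θ f))

/-- The family 𝓔_q = { x ↦ [x = t] : t ∈ [q⟩ }. -/
def Eset (q : ℕ) : Set (Fin q → Bool) :=
  { f | ∃ t : Fin q, f = fun x => decide (x = t) }

/-- The family 𝓝_q = { x ↦ [x ≠ t] : t ∈ [q⟩ }. -/
def Nset (q : ℕ) : Set (Fin q → Bool) :=
  { f | ∃ t : Fin q, f = fun x => decide (x ≠ t) }

/-- The family 𝓖_q = { x ↦ [x ≥ t] : t ∈ [q⟩ }. -/
def Gset (q : ℕ) : Set (Fin q → Bool) :=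
  { f | ∃ t : Fin q, f = fun x => decide (t ≤ x) }

/-- The family 𝓛_q = { x ↦ [x ≤ t] : t ∈ [q⟩ }. -/
def Lset (q : ℕ) : Set (Fin q → Bool) :=
  { f | ∃ t : Fin q, f = fun x => decide (x ≤ t) }

/-!
An implementation of 𝓝_q amounts to words `u x` and `θ t` such that `u x` passes `θ t` exactly
when `x ≠ t`. The word `θ t` rejects `u t` at some cell `j`, so `θ t j` is a bit, and every
`x ≠ t` agrees with that bit at `j`. With at least three inputs, two values `t ≠ s` sharing the
rejecting cell `j` would force a third input `x` to carry both `θ t j` and `θ s j = u t j ≠ θ t j`;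
so the rejecting cells are distinct and `q ≤ n`. Conversely, taking for `u x` the indicator word
of cell `x` and for `θ t` the word that is `0` at cell `t` and `∗` elsewhere implements 𝓝_q with
`q` cells, and a single bit suffices for `q = 2`.
-/

lemma Tword_eq_true_iff {n : ℕ} (u θ : Fin n → BB) :
    Tword u θ = true ↔ ∀ j, Tcell (u j) (θ j) = true := by
  simp [Tword]

lemma Tcell_eq_true_iff_of_mem_Bcirc {a : BB} (ha : a ∈ Bcirc) (b : BB) :
    Tcell a b = true ↔ b = BB.star ∨ a = b := by
  rcases ha with rfl | rfl <;> cases b <;> simp [Tcell]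

lemma Tcell_star_right (a : BB) : Tcell a BB.star = true := by
  cases a <;> rfl

def IsNsetRealization {n q : ℕ} (u θ : Fin q → Fin n → BB) : Prop :=
  ∀ x t, Tword (u x) (θ t) = decide (x ≠ t)

lemma Nset_eq_range {q : ℕ} : Nset q = Set.range fun t : Fin q => fun x => decide (x ≠ t) := by
  ext f
  exact exists_congr fun _ => eq_comm

lemma injective_decide_ne {q : ℕ} :
    Function.Injective fun t : Fin q => fun x => decide (x ≠ t) :=
  fun t s h => by simpa using congrFun h t

theorem implementable_Nset_iff {A B : Set BB} {n q : ℕ} :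
    Implementable A B n q (Nset q) ↔ ∃ u θ : Fin q → Fin n → BB,
      (∀ x j, u x j ∈ A) ∧ (∀ t j, θ t j ∈ B) ∧ IsNsetRealization u θ := by
  simp only [Implementable, Nset_eq_range, Set.forall_mem_range]
  constructor
  · rintro ⟨u, θ, hu, hθ, h⟩
    exact ⟨u, fun t => θ _, hu, hθ, fun x t => (h t x).symm⟩
  · rintro ⟨u, θ, hu, hθ, h⟩
    refine ⟨u, Function.extend (fun t : Fin q => fun x => decide (x ≠ t)) θ fun _ _ => BB.star,
      hu, ?_, ?_⟩ <;> simp only [injective_decide_ne.extend_apply]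
    exacts [hθ, fun t x => (h x t).symm]

section Necessity

variable {n q : ℕ} {u θ : Fin q → Fin n → BB}

lemma IsNsetRealization.exists_Tcell_eq_false (h : IsNsetRealization u θ) (t : Fin q) :
    ∃ j, Tcell (u t j) (θ t j) = false := by
  simpa [Tword] using h t t

lemma IsNsetRealization.eq_zero_of_cells_eq_zero (h : IsNsetRealization u θ) (hn : n = 0) :
    q = 0 := by
  subst hn
  by_contra hq
  obtain ⟨j, -⟩ := h.exists_Tcell_eq_false ⟨0, Nat.pos_of_ne_zero hq⟩
  exact j.elim0

lemma IsNsetRealization.apply_eq_of_Tcell_eq_false (h : IsNsetRealization u θ)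
    (hu : ∀ x j, u x j ∈ Bcirc) {t x : Fin q} {j : Fin n} (hj : Tcell (u t j) (θ t j) = false)
    (hx : x ≠ t) : u x j = θ t j := by
  have hpass : Tcell (u x j) (θ t j) = true := (Tword_eq_true_iff _ _).1 (by simp [h x t, hx]) j
  rcases (Tcell_eq_true_iff_of_mem_Bcirc (hu x j) _).1 hpass with hstar | heq
  · simp [hstar, Tcell_star_right] at hj
  · exact heq

lemma IsNsetRealization.le_of_two_lt (h : IsNsetRealization u θ) (hu : ∀ x j, u x j ∈ Bcirc)
    (hq : 2 < q) : q ≤ n := by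
  choose J hJ using h.exists_Tcell_eq_false
  refine Fin.le_of_injective J fun t s hts => by_contra fun hne => ?_
  obtain ⟨x, hxt, hxs⟩ := Fin.exists_ne_and_ne_of_two_lt t s hq
  have hJs := hJ s
  rw [← hts] at hJs
  have hst : u s (J t) = θ s (J t) :=
    calc u s (J t) = θ t (J t) := h.apply_eq_of_Tcell_eq_false hu (hJ t) (Ne.symm hne)
      _ = u x (J t) := (h.apply_eq_of_Tcell_eq_false hu (hJ t) hxt).symm
      _ = θ s (J t) := h.apply_eq_of_Tcell_eq_false hu hJs hxs
  simp [(Tcell_eq_true_iff_of_mem_Bcirc (hu s _) _).2 (.inr hst)] at hJs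

end Necessity

lemma isNsetRealization_oneHot {n q : ℕ} (h : q ≤ n) :
    IsNsetRealization (fun x j => if j = Fin.castLE h x then BB.one else BB.zero)
      (fun t j => if j = Fin.castLE h t then BB.zero else BB.star) := by
  intro x t
  rw [Bool.eq_iff_iff, Tword_eq_true_iff, decide_eq_true_iff]
  constructor
  · rintro hpass rfl
    simpa [Tcell] using hpass (Fin.castLE h x)
  · intro hne j
    by_cases hj : j = Fin.castLE h t
    · simp [hj, Ne.symm hne, Tcell]
    · simp [hj, Tcell_star_right]

lemma implementable_Nset_of_le {n q : ℕ} (h : q ≤ n) : Implementable Bcirc Bstar n q (Nset q) :=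
  implementable_Nset_iff.2 ⟨_, _, fun x j => by split <;> simp [Bcirc],
    fun t j => by split <;> simp [Bstar], isNsetRealization_oneHot h⟩

lemma implementable_Nset_two_one : Implementable Bcirc Bstar 1 2 (Nset 2) :=
  implementable_Nset_iff.2 ⟨fun x _ => if x = 0 then BB.zero else BB.one,
    fun t _ => if t = 0 then BB.one else BB.zero, fun x j => by beta_reduce; split <;> simp [Bcirc],
    fun t j => by beta_reduce; split <;> simp [Bstar], by unfold IsNsetRealization; decide⟩

theorem Nset_implementable_circStar_general (q n : ℕ) :
    Implementable Bcirc Bstar n q (Nset q) ↔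
      (if n = 1 then q ≤ 2 else q ≤ n) := by
  constructor
  · intro h
    obtain ⟨u, θ, hu, -, hr⟩ := implementable_Nset_iff.1 h
    have h0 : n = 0 → q = 0 := hr.eq_zero_of_cells_eq_zero
    by_cases hq : 2 < q
    · have := hr.le_of_two_lt hu hq
      split <;> omega
    · split <;> omega
  · intro h
    by_cases hqn : q ≤ n
    · exact implementable_Nset_of_le hqn
    · obtain ⟨rfl, rfl⟩ : n = 1 ∧ q = 2 := by split at h <;> omega
      exact implementable_Nset_two_one

theorem Nset_implementable_circStar (q n : ℕ) (hq : 2 ≤ q) (hn : 1 ≤ n) :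
    Implementable Bcirc Bstar n q (Nset q) ↔
      (if n = 1 then q ≤ 2 else q ≤ n) :=
  Nset_implementable_circStar_general q n
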